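/- Let n ≥ 2 and let U₁, U₂ ∈ ℝ^{n×n} be matrices such that for all Q ∈ SO(n), rank(U₁ - Q·U₂) ≠ 1 and U₁ ≠ Q·U₂. Then there exists d̄ > 0 such that for every Q ∈ SO(n) and every orthonormal set of vectors τ₁, …, τ_{n-1} ∈ ℝⁿ, one has max_{1 ≤ l ≤ n-1} |(U₁ - Q·U₂)·τ_l| ≥ d̄. -/

import Mathlib

/-! Both `SO n` and the set of orthonormal `(n-1)`-families in `ℝⁿ` are closed and bounded, hence
compact, and `(Q, τ) ↦ maxₗ |(U₁ - Q U₂) τₗ|` is continuous, so it attains its minimum on their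
product. The minimum is positive: if `U₁ - Q U₂` killed all `τₗ`, its kernel would have dimension
at least `n - 1`, so its rank would be `0` or `1`, both excluded by hypothesis. -/

open Matrix

def SO (n : ℕ) : Set (Matrix (Fin n) (Fin n) ℝ) :=
  {Q | Q.transpose * Q = 1 ∧ Q.det = 1}

noncomputable def vnorm {n : ℕ} (v : Fin n → ℝ) : ℝ := Real.sqrt (v ⬝ᵥ v)

def orthonormalFamilies (ι κ : Type*) [Fintype κ] : Set (ι → κ → ℝ) :=
  {τ | (∀ l, τ l ⬝ᵥ τ l = 1) ∧ ∀ l l', l ≠ l' → τ l ⬝ᵥ τ l' = 0}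

section
variable {ι κ : Type*} [Fintype κ]

theorem linearIndependent_of_mem_orthonormalFamilies {τ : ι → κ → ℝ}
    (hτ : τ ∈ orthonormalFamilies ι κ) : LinearIndependent ℝ τ :=
  LinearMap.BilinForm.linearIndependent_of_iIsOrtho (B := dotProductBilin ℝ ℝ)
    (fun _ _ hll' => hτ.2 _ _ hll') fun l => by simp [hτ.1 l]

theorem isClosed_orthonormalFamilies : IsClosed (orthonormalFamilies ι κ) := by
  simp only [orthonormalFamilies, Set.ofPred_and, Set.ofPred_forall]
  exact (isClosed_iInter fun l => isClosed_eq (by fun_prop) continuous_const).inter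
    (isClosed_iInter fun l => isClosed_iInter fun l' => isClosed_iInter fun _ =>
      isClosed_eq (by fun_prop) continuous_const)

theorem sq_apply_le_dotProduct_self (v : κ → ℝ) (i : κ) : v i ^ 2 ≤ v ⬝ᵥ v := by
  simpa only [dotProduct, sq] using
    Finset.single_le_sum (fun j _ => mul_self_nonneg (v j)) (Finset.mem_univ i)

theorem isCompact_of_isClosed_of_dotProduct_self_eq_one [Fintype ι] {S : Set (ι → κ → ℝ)}
    (hS : IsClosed S) (h : ∀ τ ∈ S, ∀ l, τ l ⬝ᵥ τ l = 1) : IsCompact S := by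
  refine (isCompact_univ_pi fun _ => isCompact_univ_pi fun _ => isCompact_Icc).of_isClosed_subset
    hS fun τ hτ l _ i _ => abs_le.1 (abs_le_one_iff_mul_self_le_one.2 ?_)
  simpa [← sq, h τ hτ l] using sq_apply_le_dotProduct_self (τ l) i

theorem isCompact_orthonormalFamilies [Fintype ι] : IsCompact (orthonormalFamilies ι κ) :=
  isCompact_of_isClosed_of_dotProduct_self_eq_one isClosed_orthonormalFamilies fun _ hτ => hτ.1

end

theorem isClosed_SO (n : ℕ) : IsClosed (SO n) :=
  (isClosed_eq (by fun_prop) continuous_const).inter (isClosed_eq (by fun_prop) continuous_const)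

theorem isCompact_SO (n : ℕ) : IsCompact (SO n) := by
  refine isCompact_of_isClosed_of_dotProduct_self_eq_one (isClosed_SO n)
    fun (Q : Matrix (Fin n) (Fin n) ℝ) hQ i => ?_
  have hQQt : Q * Qᵀ = 1 := mul_eq_one_comm.1 hQ.1
  simpa [mul_apply'] using congrFun (congrFun hQQt i) i

theorem Matrix.rank_add_card_le_of_mulVec_eq_zero {m n ι K : Type*} [Fintype n] [Fintype ι]
    [Field K] (B : Matrix m n K) {v : ι → n → K} (hv : LinearIndependent K v)
    (h : ∀ i, B *ᵥ v i = 0) : B.rank + Fintype.card ι ≤ Fintype.card n := by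
  have hspan : Submodule.span K (Set.range v) ≤ LinearMap.ker B.mulVecLin :=
    Submodule.span_le.2 <| Set.range_subset_iff.2 h
  have hcard : Fintype.card ι ≤ Module.finrank K (LinearMap.ker B.mulVecLin) :=
    finrank_span_eq_card hv ▸ Submodule.finrank_mono hspan
  have := LinearMap.finrank_range_add_finrank_ker B.mulVecLin
  rw [Module.finrank_fintype_fun_eq_card] at this
  exact this ▸ Nat.add_le_add_left hcard _

theorem Matrix.eq_zero_of_rank_eq_zero {m n K : Type*} [Fintype n] [DecidableEq n] [Field K]
    {B : Matrix m n K} (h : B.rank = 0) : B = 0 := by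
  have : LinearMap.range B.mulVecLin = ⊥ := Submodule.finrank_eq_zero.1 h
  exact Matrix.toLin'.injective (by rw [toLin'_apply', LinearMap.range_eq_bot.1 this, map_zero])

theorem exists_mulVec_ne_zero_of_mem_orthonormalFamilies {m : Type*} {n : ℕ}
    {B : Matrix m (Fin n) ℝ} (hB₁ : B.rank ≠ 1) (hB₀ : B ≠ 0) {τ : Fin (n - 1) → Fin n → ℝ}
    (hτ : τ ∈ orthonormalFamilies (Fin (n - 1)) (Fin n)) : ∃ l, B *ᵥ τ l ≠ 0 := by
  by_contra! hker
  have := B.rank_add_card_le_of_mulVec_eq_zero (linearIndependent_of_mem_orthonormalFamilies hτ)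
    hker
  simp only [Fintype.card_fin] at this
  exact hB₀ (eq_zero_of_rank_eq_zero (by omega))

theorem vnorm_pos {n : ℕ} {v : Fin n → ℝ} : 0 < vnorm v ↔ v ≠ 0 := by
  simpa [vnorm] using dotProduct_star_self_pos_iff (v := v)

theorem continuous_vnorm {n : ℕ} : Continuous (vnorm : (Fin n → ℝ) → ℝ) := by
  unfold vnorm; fun_prop

theorem stmt_1 (n : ℕ) (hn : 2 ≤ n) (U₁ U₂ : Matrix (Fin n) (Fin n) ℝ)
    (h : ∀ Q ∈ SO n, (U₁ - Q * U₂).rank ≠ 1 ∧ U₁ ≠ Q * U₂) :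
    ∃ d > (0 : ℝ), ∀ Q ∈ SO n, ∀ τ : Fin (n - 1) → Fin n → ℝ,
      (∀ l, τ l ⬝ᵥ τ l = 1) → (∀ l l', l ≠ l' → τ l ⬝ᵥ τ l' = 0) →
      ∃ l, vnorm ((U₁ - Q * U₂).mulVec (τ l)) ≥ d := by
  have hne : (Finset.univ : Finset (Fin (n - 1))).Nonempty := ⟨⟨0, by omega⟩, Finset.mem_univ _⟩
  let F : Matrix (Fin n) (Fin n) ℝ × (Fin (n - 1) → Fin n → ℝ) → ℝ := fun p =>
    Finset.univ.sup' hne fun l => vnorm ((U₁ - p.1 * U₂) *ᵥ p.2 l)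
  have hF : Continuous F :=
    Continuous.finset_sup'_apply hne fun l _ => continuous_vnorm.comp (by fun_prop)
  have hF_pos : ∀ p ∈ SO n ×ˢ orthonormalFamilies (Fin (n - 1)) (Fin n), 0 < F p := by
    rintro ⟨Q, τ⟩ ⟨hQ, hτ⟩
    obtain ⟨l, hl⟩ :=
      exists_mulVec_ne_zero_of_mem_orthonormalFamilies (h Q hQ).1 (sub_ne_zero.2 (h Q hQ).2) hτ
    exact (vnorm_pos.2 hl).trans_le
      (Finset.le_sup' (fun l => vnorm ((U₁ - Q * U₂) *ᵥ τ l)) (Finset.mem_univ l))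
  obtain ⟨d, hd, hdF⟩ := ((isCompact_SO n).prod isCompact_orthonormalFamilies).exists_forall_le'
    hF.continuousOn hF_pos
  refine ⟨d, hd, fun Q hQ τ hτ₁ hτ₂ => ?_⟩
  obtain ⟨l, -, hl⟩ := Finset.exists_mem_eq_sup' hne fun l => vnorm ((U₁ - Q * U₂) *ᵥ τ l)
  exact ⟨l, hl ▸ hdF (Q, τ) ⟨hQ, hτ₁, hτ₂⟩⟩
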